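/- arXiv:1611.07175 — 3 statements merged into one kernel-verified Lean document; each statement's English description precedes it below -/
import Mathlib

section
/- Let F0, F1, ..., FN be sigma-algebras such that F1,...,FN are conditionally independent given F0, and let Gn ⊆ Fn for each n = 1,...,N. Then for any events An ∈ Fn, n = 1,...,N, the conditional probability of the intersection of A1,...,AN given the sigma-algebra generated by F0, G1,...,GN equals the product of the conditional probabilities of each An given that same sigma-algebra, almost surely. -/
/-!
Adjoin the `G n` to `F0` one at a time. Suppose the `F n` are conditionally independent given `M`
and `G ≤ F j`. For `n ≠ j`, `A n` is conditionally independent of `G` given `M`, so conditioning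
on `M ⊔ G` instead of `M` does not change `P(A n | ·)`; and
`P(⋂ A | M ⊔ G) = (∏_{n ≠ j} P(A n | M)) · P(A j | M ⊔ G)`. Both are instances of one criterion:
if `P(T ∩ D | M) = Y · P(S ∩ D | M)` for every `D ∈ G`, with `Y` `M`-measurable, then
`P(T | M ⊔ G) = Y · P(S | M ⊔ G)`, which is checked by integrating over the π-system of sets
`B ∩ D` with `B ∈ M`, `D ∈ G`.
-/

open MeasureTheory MeasurableSpace

theorem Set.iInter_update_inter {ι α : Type*} [DecidableEq ι] (A : ι → Set α) (j : ι)
    (D : Set α) : ⋂ n, Function.update A j (A j ∩ D) n = (⋂ n, A n) ∩ D := by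
  ext x
  simp only [Set.mem_iInter, Set.mem_inter_iff]
  constructor
  · intro h
    have hj : x ∈ A j ∧ x ∈ D := by simpa using h j
    refine ⟨fun n => ?_, hj.2⟩
    rcases eq_or_ne n j with rfl | hn
    · exact hj.1
    · simpa [hn] using h n
  · rintro ⟨hA, hD⟩ n
    rcases eq_or_ne n j with rfl | hn
    · simpa using ⟨hA n, hD⟩
    · simpa [hn] using hA n

theorem Set.iInter_update_univ {ι α : Type*} [DecidableEq ι] (i : ι) (s : Set α) :
    ⋂ n, Function.update (fun _ => Set.univ) i s n = s := by
  ext x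
  simp [Function.update_apply]

theorem Set.mul_indicator_one_eq_indicator {α R : Type*} [MulZeroOneClass R] (f : α → R)
    (s : Set α) : f * s.indicator 1 = s.indicator f := by
  ext x
  by_cases hx : x ∈ s <;> simp [hx]

section

variable {Ω : Type*} {mΩ : MeasurableSpace Ω} {μ : Measure Ω}

theorem setIntegral_eq_setIntegral_of_isPiSystem {E : Type*} [NormedAddCommGroup E]
    [NormedSpace ℝ E] {m : MeasurableSpace Ω} {s : Set (Set Ω)} (h_eq : m = generateFrom s)
    (h_inter : IsPiSystem s) (hm : m ≤ mΩ) {f g : Ω → E} (hf : Integrable f μ)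
    (hg : Integrable g μ) (basic : ∀ t ∈ s, ∫ x in t, f x ∂μ = ∫ x in t, g x ∂μ)
    (h_univ : ∫ x, f x ∂μ = ∫ x, g x ∂μ) {t : Set Ω} (ht : MeasurableSet[m] t) :
    ∫ x in t, f x ∂μ = ∫ x in t, g x ∂μ := by
  induction t, ht using induction_on_inter h_eq h_inter with
  | empty => simp
  | basic t ht => exact basic t ht
  | compl t ht iht =>
    rw [setIntegral_compl (hm _ ht) hf, setIntegral_compl (hm _ ht) hg, iht, h_univ]
  | iUnion u hu hum ihu =>
    rw [integral_iUnion (fun i => hm _ (hum i)) hu hf.integrableOn,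
      integral_iUnion (fun i => hm _ (hum i)) hu hg.integrableOn]
    exact tsum_congr ihu

theorem isPiSystem_image2_inter (m₁ m₂ : MeasurableSpace Ω) :
    IsPiSystem (Set.image2 (· ∩ ·) {s | MeasurableSet[m₁] s} {s | MeasurableSet[m₂] s}) := by
  rintro _ ⟨s₁, hs₁, t₁, ht₁, rfl⟩ _ ⟨s₂, hs₂, t₂, ht₂, rfl⟩ -
  exact ⟨s₁ ∩ s₂, hs₁.inter hs₂, t₁ ∩ t₂, ht₁.inter ht₂, Set.inter_inter_inter_comm _ _ _ _⟩

theorem generateFrom_image2_inter (m₁ m₂ : MeasurableSpace Ω) :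
    generateFrom (Set.image2 (· ∩ ·) {s | MeasurableSet[m₁] s} {s | MeasurableSet[m₂] s})
      = m₁ ⊔ m₂ := by
  refine le_antisymm (generateFrom_le ?_) (sup_le (fun s hs => ?_) (fun s hs => ?_))
  · rintro _ ⟨s, hs, t, ht, rfl⟩
    exact (le_sup_left (b := m₂) _ hs).inter (le_sup_right (a := m₁) _ ht)
  · exact measurableSet_generateFrom ⟨s, hs, Set.univ, MeasurableSet.univ, Set.inter_univ s⟩
  · exact measurableSet_generateFrom ⟨Set.univ, MeasurableSet.univ, s, hs, Set.univ_inter s⟩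

theorem condExp_sup_ae_eq_of_setIntegral_inter_eq {E : Type*} [NormedAddCommGroup E]
    [NormedSpace ℝ E] [CompleteSpace E] [IsFiniteMeasure μ] {m₁ m₂ : MeasurableSpace Ω}
    (hm₁ : m₁ ≤ mΩ) (hm₂ : m₂ ≤ mΩ) {f g : Ω → E} (hf : Integrable f μ) (hg : Integrable g μ)
    (h : ∀ s t, MeasurableSet[m₁] s → MeasurableSet[m₂] t →
      ∫ x in s ∩ t, f x ∂μ = ∫ x in s ∩ t, g x ∂μ) :
    μ[f | m₁ ⊔ m₂] =ᵐ[μ] μ[g | m₁ ⊔ m₂] := by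
  have hm : m₁ ⊔ m₂ ≤ mΩ := sup_le hm₁ hm₂
  refine ae_eq_condExp_of_forall_setIntegral_eq hm hg
    (fun _ _ _ => integrable_condExp.integrableOn) (fun s hs _ => ?_)
    stronglyMeasurable_condExp.aestronglyMeasurable
  rw [setIntegral_condExp hm hf hs]
  refine setIntegral_eq_setIntegral_of_isPiSystem (generateFrom_image2_inter m₁ m₂).symm
    (isPiSystem_image2_inter m₁ m₂) hm hf hg ?_ ?_ hs
  · rintro _ ⟨s, hs, t, ht, rfl⟩
    exact h s t hs ht
  · simpa using h Set.univ Set.univ MeasurableSet.univ MeasurableSet.univ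

theorem condExp_indicator_sup_ae_eq_mul [IsFiniteMeasure μ] {m₁ m₂ : MeasurableSpace Ω}
    (hm₁ : m₁ ≤ mΩ) (hm₂ : m₂ ≤ mΩ) {S T : Set Ω} (hS : MeasurableSet[mΩ] S)
    (hT : MeasurableSet[mΩ] T) {Y : Ω → ℝ} (hYm : StronglyMeasurable[m₁] Y) (hYi : Integrable Y μ)
    (h : ∀ D, MeasurableSet[m₂] D →
      μ[(T ∩ D).indicator 1 | m₁] =ᵐ[μ] Y * μ[(S ∩ D).indicator 1 | m₁]) :
    μ[T.indicator 1 | m₁ ⊔ m₂] =ᵐ[μ] Y * μ[S.indicator 1 | m₁ ⊔ m₂] := by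
  have hYS : Integrable (Y * S.indicator 1) μ := by
    rw [Set.mul_indicator_one_eq_indicator]; exact hYi.indicator hS
  refine (condExp_sup_ae_eq_of_setIntegral_inter_eq hm₁ hm₂ ((integrable_const 1).indicator hT)
    hYS fun B D hB hD => ?_).trans
    (condExp_mul_of_stronglyMeasurable_left (hYm.mono le_sup_left) hYS
      ((integrable_const 1).indicator hS))
  have hD' := hm₂ D hD
  have hYSD : Integrable (Y * (S ∩ D).indicator 1) μ := by
    rw [Set.mul_indicator_one_eq_indicator]; exact hYi.indicator (hS.inter hD')
  calc ∫ x in B ∩ D, T.indicator (1 : Ω → ℝ) x ∂μ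
      = ∫ x in B, (T ∩ D).indicator (1 : Ω → ℝ) x ∂μ := by
        rw [← setIntegral_indicator hD', Set.indicator_indicator, Set.inter_comm]
    _ = ∫ x in B, (μ[(T ∩ D).indicator 1 | m₁]) x ∂μ :=
        (setIntegral_condExp hm₁ ((integrable_const 1).indicator (hT.inter hD')) hB).symm
    _ = ∫ x in B, (μ[Y * (S ∩ D).indicator 1 | m₁]) x ∂μ :=
        integral_congr_ae (ae_restrict_of_ae ((h D hD).trans
          (condExp_mul_of_stronglyMeasurable_left hYm hYSD
            ((integrable_const 1).indicator (hS.inter hD'))).symm))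
    _ = ∫ x in B, (Y * (S ∩ D).indicator (1 : Ω → ℝ)) x ∂μ := setIntegral_condExp hm₁ hYSD hB
    _ = ∫ x in B ∩ D, (Y * S.indicator (1 : Ω → ℝ)) x ∂μ := by
        rw [Set.mul_indicator_one_eq_indicator, Set.mul_indicator_one_eq_indicator,
          ← setIntegral_indicator hD', Set.indicator_indicator, Set.inter_comm]

theorem ae_abs_condExp_indicator_one_le (m : MeasurableSpace Ω) (s : Set Ω) :
    ∀ᵐ x ∂μ, |(μ[s.indicator (1 : Ω → ℝ) | m]) x| ≤ 1 :=
  ae_bdd_abs_condExp_of_ae_bdd_abs (ae_of_all μ fun x => by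
    by_cases hx : x ∈ s <;> simp [hx])

theorem integrable_prod_condExp_indicator_one [IsFiniteMeasure μ] {ι : Type*}
    (m : MeasurableSpace Ω) (A : ι → Set Ω) (t : Finset ι) :
    Integrable (∏ n ∈ t, μ[(A n).indicator (1 : Ω → ℝ) | m]) μ := by
  refine .of_bound (Finset.aestronglyMeasurable_prod t fun n _ =>
    integrable_condExp.aestronglyMeasurable) 1 ?_
  filter_upwards [(Filter.eventually_all_finset t).2 fun n _ =>
    ae_abs_condExp_indicator_one_le (μ := μ) m (A n)] with x hx
  rw [Finset.prod_apply, Real.norm_eq_abs, Finset.abs_prod]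
  exact Finset.prod_le_one (fun n _ => abs_nonneg _) fun n hn => hx n hn

def CondIndepFamily {ι : Type*} [Fintype ι] (μ : Measure Ω) (m : MeasurableSpace Ω)
    (F : ι → MeasurableSpace Ω) : Prop :=
  ∀ A : ι → Set Ω, (∀ n, MeasurableSet[F n] (A n)) →
    μ[(⋂ n, A n).indicator (1 : Ω → ℝ) | m] =ᵐ[μ] fun ω => ∏ n, (μ[(A n).indicator 1 | m]) ω

namespace CondIndepFamily

variable {ι : Type*} [Fintype ι] [DecidableEq ι] {m : MeasurableSpace Ω}
  {F : ι → MeasurableSpace Ω}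

theorem condExp_indicator_iInter_inter (h : CondIndepFamily μ m F) {A : ι → Set Ω}
    (hA : ∀ n, MeasurableSet[F n] (A n)) (j : ι) {D : Set Ω} (hD : MeasurableSet[F j] D) :
    μ[((⋂ n, A n) ∩ D).indicator (1 : Ω → ℝ) | m] =ᵐ[μ]
      (∏ n ∈ Finset.univ.erase j, μ[(A n).indicator 1 | m]) * μ[(A j ∩ D).indicator 1 | m] := by
  have hA' : ∀ n, MeasurableSet[F n] (Function.update A j (A j ∩ D) n) := by
    intro n
    rcases eq_or_ne n j with rfl | hn
    · simpa using (hA n).inter hD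
    · simpa [hn] using hA n
  refine ((Set.iInter_update_inter A j D) ▸ h _ hA').trans (ae_of_all μ fun ω => ?_)
  simp only [Pi.mul_apply, Finset.prod_apply]
  rw [← Finset.mul_prod_erase Finset.univ _ (Finset.mem_univ j), mul_comm, Function.update_self]
  congr 1
  refine Finset.prod_congr rfl fun n hn => ?_
  rw [Function.update_of_ne (Finset.ne_of_mem_erase hn)]

theorem condExp_indicator_inter [IsFiniteMeasure μ] (h : CondIndepFamily μ m F) (hm : m ≤ mΩ)
    {i j : ι} (hij : i ≠ j) {s t : Set Ω} (hs : MeasurableSet[F i] s) (ht : MeasurableSet[F j] t) :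
    μ[(s ∩ t).indicator (1 : Ω → ℝ) | m] =ᵐ[μ] μ[s.indicator 1 | m] * μ[t.indicator 1 | m] := by
  have hA : ∀ n, MeasurableSet[F n] (Function.update (fun _ => Set.univ) i s n) := by
    intro n
    rcases eq_or_ne n i with rfl | hn
    · simpa using hs
    · simp [hn]
  have hprod : ∏ n ∈ Finset.univ.erase j,
      μ[(Function.update (fun _ => Set.univ) i s n).indicator (1 : Ω → ℝ) | m]
        = μ[s.indicator 1 | m] := by
    simp_rw [Function.apply_update (fun _ (u : Set Ω) => μ[u.indicator (1 : Ω → ℝ) | m])]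
    rw [Finset.prod_update_of_mem (Finset.mem_erase.2 ⟨hij, Finset.mem_univ i⟩)]
    simp [show μ[(1 : Ω → ℝ) | m] = 1 from condExp_const hm 1]
  simpa [Set.iInter_update_univ, hprod, Function.update_of_ne hij.symm] using
    h.condExp_indicator_iInter_inter hA j ht

theorem sup_of_le [IsFiniteMeasure μ] (h : CondIndepFamily μ m F) (hm : m ≤ mΩ)
    (hF : ∀ n, F n ≤ mΩ) {G : MeasurableSpace Ω} {j : ι} (hGF : G ≤ F j) :
    CondIndepFamily μ (m ⊔ G) F := by
  intro A hA
  have hAm n : MeasurableSet[mΩ] (A n) := hF n _ (hA n)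
  have hG : G ≤ mΩ := hGF.trans (hF j)
  have h_one : μ[(1 : Ω → ℝ) | m ⊔ G] = 1 := condExp_const (sup_le hm hG) 1
  have h_other : ∀ n ∈ Finset.univ.erase j,
      μ[(A n).indicator (1 : Ω → ℝ) | m ⊔ G] =ᵐ[μ] μ[(A n).indicator 1 | m] := by
    intro n hn
    have := condExp_indicator_sup_ae_eq_mul hm hG MeasurableSet.univ (hAm n)
      stronglyMeasurable_condExp integrable_condExp fun D hD => by
        simpa using h.condExp_indicator_inter hm (Finset.ne_of_mem_erase hn) (hA n) (hGF D hD)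
    rwa [Set.indicator_univ, h_one, mul_one] at this
  have h_inter := condExp_indicator_sup_ae_eq_mul hm hG (hAm j) (MeasurableSet.iInter hAm)
    (Finset.stronglyMeasurable_prod _ fun n _ => stronglyMeasurable_condExp)
    (integrable_prod_condExp_indicator_one m A _)
    fun D hD => h.condExp_indicator_iInter_inter hA j (hGF D hD)
  filter_upwards [h_inter, (Filter.eventually_all_finset _).2 h_other] with ω hω hω_other
  rw [hω, ← Finset.mul_prod_erase Finset.univ _ (Finset.mem_univ j), mul_comm, Pi.mul_apply,
    Finset.prod_apply]
  congr 1
  exact Finset.prod_congr rfl fun n hn => (hω_other n hn).symm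

theorem sup_finsetSup [IsFiniteMeasure μ] (h : CondIndepFamily μ m F) (hm : m ≤ mΩ)
    (hF : ∀ n, F n ≤ mΩ) {G : ι → MeasurableSpace Ω} (hGF : ∀ n, G n ≤ F n) (s : Finset ι) :
    CondIndepFamily μ (m ⊔ s.sup G) F := by
  induction s using Finset.induction_on with
  | empty => simpa using h
  | insert j s _ ih =>
    rw [Finset.sup_insert, sup_comm (G j), ← sup_assoc]
    exact ih.sup_of_le (sup_le hm (Finset.sup_le fun n _ => (hGF n).trans (hF n))) hF (hGF j)

end CondIndepFamily

end

/-- If `F1,...,FN` are conditionally independent given `F0` and `Gn ⊆ Fn`,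
then for events `An ∈ Fn`, the conditional probability of `⋂ An` given
`σ(F0, G1,...,GN)` equals the product of the conditional probabilities of the `An`
given that same sigma-algebra, almost surely. -/
theorem stmt4 {Ω : Type*} {mΩ : MeasurableSpace Ω} (μ : Measure Ω)
    [IsProbabilityMeasure μ] (N : ℕ)
    (F0 : MeasurableSpace Ω) (F G : Fin N → MeasurableSpace Ω)
    (hF0 : F0 ≤ mΩ) (hF : ∀ n, F n ≤ mΩ) (hG : ∀ n, G n ≤ F n)
    -- conditional independence of F1,...,FN given F0:
    (hCI : ∀ A : Fin N → Set Ω, (∀ n, MeasurableSet[F n] (A n)) →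
      (μ[Set.indicator (⋂ n, A n) (fun _ => (1 : ℝ)) | F0]) =ᵐ[μ]
        (fun ω => ∏ n, (μ[Set.indicator (A n) (fun _ => (1 : ℝ)) | F0]) ω))
    (A : Fin N → Set Ω) (hA : ∀ n, MeasurableSet[F n] (A n)) :
    (μ[Set.indicator (⋂ n, A n) (fun _ => (1 : ℝ)) | F0 ⊔ ⨆ n, G n]) =ᵐ[μ]
      (fun ω => ∏ n,
        (μ[Set.indicator (A n) (fun _ => (1 : ℝ)) | F0 ⊔ ⨆ n, G n]) ω) := by
  have h := CondIndepFamily.sup_finsetSup hCI hF0 hF hG Finset.univ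
  rw [Finset.sup_univ_eq_iSup] at h
  exact h A hA
end

section
/- Under the assumptions of the static team problem with N independent players: with R symmetric PSD block matrix indexed by states X^1,...,X^N and controls U^1,...,U^N, with the control-block R^{UU} block-diagonal-dominant in the sense of the problem, the functional optimization min over zero-mean measurable q_1,...,q_N of tr(R · Cov(vec(X^1,...,X^N, q_1(X^1),...,q_N(X^N)))) decomposes into N separate single-player problems: it equals the sum over n of min over zero-mean q_n of E[(X^n - μ_n; q_n(X^n))^T R̃^n (X^n - μ_n; q_n(X^n))], where R̃^n is the submatrix of R corresponding to indices (X^n, U^n). -/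
/-!
Split the stacked vector into the blocks `(Xⁿ - μₙ, qₙ(Xⁿ))` of the players. The cost is a
combination, with weights `R`, of second moments of coordinates; a moment between coordinates
of two different players factors by independence and vanishes because both are centred. Hence
the team cost is the sum of the single-player costs, each depending on its own `qₙ` only, and
the set of attainable team costs is the Minkowski sum of the sets of single-player costs. These
are bounded below by `0` (as `R` is positive semidefinite), so the infimum of the Minkowski sum
is the sum of the infima.
-/

open Matrix MeasureTheory ProbabilityTheory
open scoped Pointwise

lemma csInf_finset_sum {ι M : Type*} [ConditionallyCompleteLattice M] [AddCommGroup M]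
    [AddLeftMono M] {S : ι → Set M} {s : Finset ι} (hne : ∀ i ∈ s, (S i).Nonempty)
    (hbdd : ∀ i ∈ s, BddBelow (S i)) :
    sInf (∑ i ∈ s, S i) = ∑ i ∈ s, sInf (S i) := by
  classical
  suffices (∑ i ∈ s, S i).Nonempty ∧ BddBelow (∑ i ∈ s, S i) ∧
      sInf (∑ i ∈ s, S i) = ∑ i ∈ s, sInf (S i) from this.2.2
  induction s using Finset.induction_on with
  | empty => simp [← Set.singleton_zero]
  | insert i s hi ih =>
    simp only [Finset.forall_mem_insert] at hne hbdd
    obtain ⟨hne_s, hbdd_s, hsInf⟩ := ih hne.2 hbdd.2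
    rw [Finset.sum_insert hi, Finset.sum_insert hi, csInf_add hne.1 hbdd.1 hne_s hbdd_s, hsInf]
    exact ⟨hne.1.add hne_s, hbdd.1.add hbdd_s, rfl⟩

section Quadratic

variable {Ω ι : Type*} [MeasurableSpace Ω] {μ : Measure Ω} [Fintype ι]

theorem integral_dotProduct_mulVec (R : Matrix ι ι ℝ) {Z : Ω → ι → ℝ}
    (hZ : ∀ a, MemLp (fun ω => Z ω a) 2 μ) :
    ∫ ω, Z ω ⬝ᵥ R *ᵥ Z ω ∂μ = ∑ a, ∑ b, R a b * ∫ ω, Z ω a * Z ω b ∂μ := by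
  have hint : ∀ a b, Integrable (fun ω => R a b * (Z ω a * Z ω b)) μ := fun a b =>
    ((hZ a).integrable_mul (hZ b)).const_mul _
  have hexpand : ∀ ω, Z ω ⬝ᵥ R *ᵥ Z ω = ∑ a, ∑ b, R a b * (Z ω a * Z ω b) := fun ω => by
    simp only [dotProduct, mulVec, Finset.mul_sum]
    exact Finset.sum_congr rfl fun a _ => Finset.sum_congr rfl fun b _ => by ring
  simp_rw [hexpand]
  rw [integral_finsetSum _ fun a _ => integrable_finsetSum _ fun b _ => hint a b]
  refine Finset.sum_congr rfl fun a _ => ?_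
  rw [integral_finsetSum _ fun b _ => hint a b]
  exact Finset.sum_congr rfl fun b _ => integral_const_mul _ _

theorem integral_dotProduct_mulVec_eq_sum_blocks {N : Type*} [Fintype N]
    {κ : N → Type*} [∀ n, Fintype (κ n)] (σ : (Σ n, κ n) ≃ ι) (R : Matrix ι ι ℝ)
    {Z : Ω → ι → ℝ} (hZ : ∀ a, MemLp (fun ω => Z ω a) 2 μ)
    (huncorr : ∀ n m c c', n ≠ m → ∫ ω, Z ω (σ ⟨n, c⟩) * Z ω (σ ⟨m, c'⟩) ∂μ = 0) :
    ∫ ω, Z ω ⬝ᵥ R *ᵥ Z ω ∂μ = ∑ n, ∫ ω, (fun c => Z ω (σ ⟨n, c⟩)) ⬝ᵥ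
      R.submatrix (σ ∘ Sigma.mk n) (σ ∘ Sigma.mk n) *ᵥ (fun c => Z ω (σ ⟨n, c⟩)) ∂μ := by
  rw [integral_dotProduct_mulVec R hZ, ← σ.sum_comp, Fintype.sum_sigma]
  refine Finset.sum_congr rfl fun n _ => ?_
  rw [integral_dotProduct_mulVec _ fun c => hZ (σ ⟨n, c⟩)]
  refine Finset.sum_congr rfl fun c _ => ?_
  rw [← σ.sum_comp, Fintype.sum_sigma, Finset.sum_eq_single n]
  · rfl
  · intro m _ hmn
    exact Finset.sum_eq_zero fun c' _ => by rw [huncorr n m c c' hmn.symm, mul_zero]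
  · exact absurd (Finset.mem_univ n)

theorem ProbabilityTheory.iIndepFun.integral_dotProduct_mulVec_eq_sum_submatrix
    {N : Type*} [Fintype N] {κ : N → Type*} [∀ n, Fintype (κ n)]
    {E : N → Type*} [∀ n, MeasurableSpace (E n)]
    {X : ∀ n, Ω → E n} (hX : iIndepFun X μ) (σ : (Σ n, κ n) ≃ ι) (R : Matrix ι ι ℝ)
    {Z : Ω → ι → ℝ} {φ : ∀ n, E n → κ n → ℝ} (hφ : ∀ n c, Measurable fun x => φ n x c)
    (hφ2 : ∀ n c, MemLp (fun ω => φ n (X n ω) c) 2 μ)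
    (hφ0 : ∀ n c, ∫ ω, φ n (X n ω) c ∂μ = 0)
    (hZ : ∀ ω n c, Z ω (σ ⟨n, c⟩) = φ n (X n ω) c) :
    ∫ ω, Z ω ⬝ᵥ R *ᵥ Z ω ∂μ = ∑ n, ∫ ω, φ n (X n ω) ⬝ᵥ
      R.submatrix (σ ∘ Sigma.mk n) (σ ∘ Sigma.mk n) *ᵥ φ n (X n ω) ∂μ := by
  have hZ2 : ∀ a, MemLp (fun ω => Z ω a) 2 μ := by
    intro a
    obtain ⟨⟨n, c⟩, rfl⟩ := σ.surjective a
    simpa only [hZ] using hφ2 n c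
  have huncorr : ∀ n m c c', n ≠ m → ∫ ω, Z ω (σ ⟨n, c⟩) * Z ω (σ ⟨m, c'⟩) ∂μ = 0 := by
    intro n m c c' hnm
    have hprod := ((hX.indepFun hnm).comp (hφ n c) (hφ m c')).integral_mul_eq_mul_integral
      (hφ2 n c).1 (hφ2 m c').1
    simp only [hZ]
    simpa only [Pi.mul_apply, Function.comp_apply, hφ0 n c, zero_mul] using hprod
  rw [integral_dotProduct_mulVec_eq_sum_blocks σ R hZ2 huncorr]
  simp only [hZ]

end Quadratic

theorem stmt8_general {N : ℕ} {d e : Fin N → ℕ} {Ω : Type*} [MeasurableSpace Ω]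
    (μ : Measure Ω) [IsProbabilityMeasure μ]
    (X : (n : Fin N) → Ω → (Fin (d n) → ℝ))
    (hindep : iIndepFun X μ)
    (hX2 : ∀ n i, MemLp (fun ω => X n ω i) 2 μ)
    (mX : (n : Fin N) → Fin (d n) → ℝ) (hmX : ∀ n i, mX n i = ∫ ω, X n ω i ∂μ)
    (R : Matrix ((Σ n : Fin N, Fin (d n)) ⊕ (Σ n : Fin N, Fin (e n)))
                ((Σ n : Fin N, Fin (d n)) ⊕ (Σ n : Fin N, Fin (e n))) ℝ)
    (hR : R.PosSemidef) :
    sInf {y : ℝ | ∃ q : (n : Fin N) → (Fin (d n) → ℝ) → (Fin (e n) → ℝ),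
        (∀ n, Measurable (q n)) ∧
        (∀ n j, MemLp (fun ω => q n (X n ω) j) 2 μ) ∧
        (∀ n j, (∫ ω, q n (X n ω) j ∂μ) = 0) ∧
        y = ∫ ω, (Sum.elim (fun p : Σ n : Fin N, Fin (d n) => X p.1 ω p.2 - mX p.1 p.2)
                    (fun p : Σ n : Fin N, Fin (e n) => q p.1 (X p.1 ω) p.2)) ⬝ᵥ
              R.mulVec
                (Sum.elim (fun p : Σ n : Fin N, Fin (d n) => X p.1 ω p.2 - mX p.1 p.2)
                  (fun p : Σ n : Fin N, Fin (e n) => q p.1 (X p.1 ω) p.2)) ∂μ} =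
    ∑ n : Fin N,
      sInf {y : ℝ | ∃ qn : (Fin (d n) → ℝ) → (Fin (e n) → ℝ), Measurable qn ∧
        (∀ j, MemLp (fun ω => qn (X n ω) j) 2 μ) ∧
        (∀ j, (∫ ω, qn (X n ω) j ∂μ) = 0) ∧
        y = ∫ ω, (Sum.elim (fun i => X n ω i - mX n i) (qn (X n ω))) ⬝ᵥ
              (R.submatrix (Sum.map (fun i => (⟨n, i⟩ : Σ k, Fin (d k)))
                             (fun j => (⟨n, j⟩ : Σ k, Fin (e k))))
                           (Sum.map (fun i => (⟨n, i⟩ : Σ k, Fin (d k)))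
                             (fun j => (⟨n, j⟩ : Σ k, Fin (e k))))).mulVec
                (Sum.elim (fun i => X n ω i - mX n i) (qn (X n ω))) ∂μ} := by
  have cost_eq_sum (q : ∀ n, (Fin (d n) → ℝ) → Fin (e n) → ℝ) (hq : ∀ n, Measurable (q n))
      (hq2 : ∀ n j, MemLp (fun ω => q n (X n ω) j) 2 μ)
      (hq0 : ∀ n j, ∫ ω, q n (X n ω) j ∂μ = 0) :=
    hindep.integral_dotProduct_mulVec_eq_sum_submatrix (Equiv.sigmaSumDistrib _ _) R
      (Z := fun ω => Sum.elim (fun p => X p.1 ω p.2 - mX p.1 p.2) fun p => q p.1 (X p.1 ω) p.2)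
      (φ := fun n x => Sum.elim (fun i => x i - mX n i) (q n x))
      (by rintro n (i | j)
          · exact (measurable_pi_apply i).sub_const _
          · exact (measurable_pi_apply j).comp (hq n))
      (by rintro n (i | j)
          · exact (hX2 n i).sub (memLp_const _)
          · exact hq2 n j)
      (by rintro n (i | j)
          · simp [integral_sub ((hX2 n i).integrable one_le_two), hmX]
          · exact hq0 n j)
      (fun ω n c => by cases c <;> rfl)
  rw [← csInf_finset_sum]
  · congr 1
    ext y
    rw [Set.mem_fintype_sum]
    constructor
    · rintro ⟨q, hq, hq2, hq0, rfl⟩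
      exact ⟨_, fun n => ⟨q n, hq n, hq2 n, hq0 n, rfl⟩, (cost_eq_sum q hq hq2 hq0).symm⟩
    · rintro ⟨cost, hcost, rfl⟩
      choose q hq hq2 hq0 hcost_eq using hcost
      refine ⟨q, hq, hq2, hq0, ?_⟩
      rw [cost_eq_sum q hq hq2 hq0]
      exact Finset.sum_congr rfl fun n _ => hcost_eq n
  · exact fun n _ => ⟨_, fun _ => 0, measurable_const, fun _ => memLp_const 0, by simp, rfl⟩
  · refine fun n _ => ⟨0, ?_⟩
    rintro _ ⟨qn, -, -, -, rfl⟩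
    exact integral_nonneg fun ω => by simpa using (hR.submatrix _).dotProduct_mulVec_nonneg _

/-- Static team problem with `N` independent players: the functional
optimization over zero-mean measurable `q_1,...,q_N` of
`E[vec(X¹-μ₁,...,Xᴺ-μ_N, q₁(X¹),...,q_N(Xᴺ))ᵀ R vec(...)]`
(equal to `tr(R·Cov)` of the stacked vector) decomposes into `N` separate
single-player problems, each with the submatrix `R̃ⁿ` of `R` corresponding to the
indices `(Xⁿ, Uⁿ)`. -/
theorem stmt8 {N : ℕ} {d e : Fin N → ℕ} {Ω : Type*} [MeasurableSpace Ω]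
    (μ : Measure Ω) [IsProbabilityMeasure μ]
    (X : (n : Fin N) → Ω → (Fin (d n) → ℝ)) (hXmeas : ∀ n, Measurable (X n))
    (hindep : iIndepFun X μ)
    (hX2 : ∀ n i, MemLp (fun ω => X n ω i) 2 μ)
    (mX : (n : Fin N) → Fin (d n) → ℝ) (hmX : ∀ n i, mX n i = ∫ ω, X n ω i ∂μ)
    (R : Matrix ((Σ n : Fin N, Fin (d n)) ⊕ (Σ n : Fin N, Fin (e n)))
                ((Σ n : Fin N, Fin (d n)) ⊕ (Σ n : Fin N, Fin (e n))) ℝ)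
    (hR : R.PosSemidef) :
    sInf {y : ℝ | ∃ q : (n : Fin N) → (Fin (d n) → ℝ) → (Fin (e n) → ℝ),
        (∀ n, Measurable (q n)) ∧
        (∀ n j, MemLp (fun ω => q n (X n ω) j) 2 μ) ∧
        (∀ n j, (∫ ω, q n (X n ω) j ∂μ) = 0) ∧
        y = ∫ ω, (Sum.elim (fun p : Σ n : Fin N, Fin (d n) => X p.1 ω p.2 - mX p.1 p.2)
                    (fun p : Σ n : Fin N, Fin (e n) => q p.1 (X p.1 ω) p.2)) ⬝ᵥ
              R.mulVec
                (Sum.elim (fun p : Σ n : Fin N, Fin (d n) => X p.1 ω p.2 - mX p.1 p.2)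
                  (fun p : Σ n : Fin N, Fin (e n) => q p.1 (X p.1 ω) p.2)) ∂μ} =
    ∑ n : Fin N,
      sInf {y : ℝ | ∃ qn : (Fin (d n) → ℝ) → (Fin (e n) → ℝ), Measurable qn ∧
        (∀ j, MemLp (fun ω => qn (X n ω) j) 2 μ) ∧
        (∀ j, (∫ ω, qn (X n ω) j ∂μ) = 0) ∧
        y = ∫ ω, (Sum.elim (fun i => X n ω i - mX n i) (qn (X n ω))) ⬝ᵥ
              (R.submatrix (Sum.map (fun i => (⟨n, i⟩ : Σ k, Fin (d k)))
                             (fun j => (⟨n, j⟩ : Σ k, Fin (e k))))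
                           (Sum.map (fun i => (⟨n, i⟩ : Σ k, Fin (d k)))
                             (fun j => (⟨n, j⟩ : Σ k, Fin (e k))))).mulVec
                (Sum.elim (fun i => X n ω i - mX n i) (qn (X n ω))) ∂μ} :=
  stmt8_general μ X hindep hX2 mX hmX R hR
end

section
/- The backwards Riccati recursion P_{T+1} = 0, P_t = Ω(P_{t+1}, A, B, R_t^{XX}, R_t^{UU}, R_t^{XU}) produces symmetric positive semi-definite matrices P_t for every t = 0,...,T+1, provided each R_t is symmetric PSD with R_t^{UU} positive definite. -/
/-!
`Ω(P, A, B, R)` is the Schur complement, with respect to its lower right block, of the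
block matrix `R + [A B]ᵀ P [A B]`. For `P ⪰ 0` and `R ⪰ 0` this block matrix is positive
semidefinite, and its lower right block `R22 + Bᵀ P B` is positive definite because `R22` is,
so the Schur complement is positive semidefinite. Starting from `P_{T+1} = 0`, backward
induction on `t` gives `P_t ⪰ 0` for all `t`.
-/

open Matrix

/-- The Riccati-type operator `Ω`. -/
noncomputable def riccatiOmega {n m : ℕ} (P A : Matrix (Fin n) (Fin n) ℝ)
    (B : Matrix (Fin n) (Fin m) ℝ) (R11 : Matrix (Fin n) (Fin n) ℝ)
    (R22 : Matrix (Fin m) (Fin m) ℝ) (R12 : Matrix (Fin n) (Fin m) ℝ) :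
    Matrix (Fin n) (Fin n) ℝ :=
  R11 + Aᵀ * P * A -
    (R12 + Aᵀ * P * B) * (R22 + Bᵀ * P * B)⁻¹ * (R12ᵀ + Bᵀ * P * A)

theorem Matrix.transpose_fromCols_mul_mul_fromCols {l m n R : Type*} [Fintype l] [Semiring R] (P : Matrix l l R) (A : Matrix l m R) (B : Matrix l n R) :
    (fromCols A B)ᵀ * P * fromCols A B =
      fromBlocks (Aᵀ * P * A) (Aᵀ * P * B) (Bᵀ * P * A) (Bᵀ * P * B) := by
  rw [transpose_fromCols, fromRows_mul, fromRows_mul_fromCols]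

theorem Matrix.PosSemidef.transpose_mul_mul_same {m n : Type*} [Fintype m] [Finite n]
    {P : Matrix m m ℝ} (hP : P.PosSemidef) (B : Matrix m n ℝ) : (Bᵀ * P * B).PosSemidef := by
  simpa only [conjTranspose_eq_transpose_of_trivial] using hP.conjTranspose_mul_mul_same B

theorem Matrix.PosSemidef.fromBlocks_add_transpose_fromCols_mul_mul_fromCols
    {l m n : Type*} [Fintype l] [Finite m] [Finite n]
    {P : Matrix l l ℝ} (hP : P.PosSemidef) (A : Matrix l m ℝ) (B : Matrix l n ℝ)
    {R11 : Matrix m m ℝ} {R12 : Matrix m n ℝ} {R22 : Matrix n n ℝ}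
    (hR : (fromBlocks R11 R12 R12ᵀ R22).PosSemidef) :
    (fromBlocks (R11 + Aᵀ * P * A) (R12 + Aᵀ * P * B)
      (R12 + Aᵀ * P * B)ᵀ (R22 + Bᵀ * P * B)).PosSemidef := by
  have hPt : Pᵀ = P := (isHermitian_iff_isSymm.mp hP.isHermitian).eq
  have hcost := hP.transpose_mul_mul_same (fromCols A B)
  rw [transpose_fromCols_mul_mul_fromCols] at hcost
  convert hR.add hcost using 1
  simp only [fromBlocks_add, transpose_add, transpose_mul, transpose_transpose, hPt,
    Matrix.mul_assoc]

theorem riccatiOmega_posSemidef {n m : ℕ} {P : Matrix (Fin n) (Fin n) ℝ}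
    (hP : P.PosSemidef) (A : Matrix (Fin n) (Fin n) ℝ) (B : Matrix (Fin n) (Fin m) ℝ)
    {R11 : Matrix (Fin n) (Fin n) ℝ} {R22 : Matrix (Fin m) (Fin m) ℝ}
    {R12 : Matrix (Fin n) (Fin m) ℝ}
    (hR : (fromBlocks R11 R12 R12ᵀ R22).PosSemidef) (hR22 : R22.PosDef) :
    (riccatiOmega P A B R11 R22 R12).PosSemidef := by
  have hD : (R22 + Bᵀ * P * B).PosDef := hR22.add_posSemidef (hP.transpose_mul_mul_same B)
  have := hD.isUnit.invertible
  have hschur := (PosDef.fromBlocks₂₂ _ _ hD).mp <| by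
    simpa only [conjTranspose_eq_transpose_of_trivial] using
      hP.fromBlocks_add_transpose_fromCols_mul_mul_fromCols A B hR
  have hPt : Pᵀ = P := (isHermitian_iff_isSymm.mp hP.isHermitian).eq
  simpa only [riccatiOmega, conjTranspose_eq_transpose_of_trivial, transpose_add, transpose_mul,
    transpose_transpose, hPt, Matrix.mul_assoc] using hschur

/-- The backwards Riccati recursion `P_{T+1} = 0`,
`P_t = Ω(P_{t+1}, A, B, R_t^{XX}, R_t^{UU}, R_t^{XU})` produces symmetric PSD
matrices for every `t = 0,...,T+1`, provided each `R_t` is symmetric PSD with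
`R_t^{UU}` positive definite. -/
theorem stmt10 {n m : ℕ} (T : ℕ) (A : Matrix (Fin n) (Fin n) ℝ)
    (B : Matrix (Fin n) (Fin m) ℝ)
    (RXX : ℕ → Matrix (Fin n) (Fin n) ℝ) (RXU : ℕ → Matrix (Fin n) (Fin m) ℝ)
    (RUU : ℕ → Matrix (Fin m) (Fin m) ℝ)
    (hRt : ∀ t ≤ T, (Matrix.fromBlocks (RXX t) (RXU t) (RXU t)ᵀ (RUU t)).PosSemidef)
    (hRUU : ∀ t ≤ T, (RUU t).PosDef)
    (P : ℕ → Matrix (Fin n) (Fin n) ℝ)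
    (hPfinal : P (T + 1) = 0)
    (hPrec : ∀ t ≤ T, P t = riccatiOmega (P (t + 1)) A B (RXX t) (RUU t) (RXU t)) :
    ∀ t ≤ T + 1, (P t).PosSemidef := by
  intro t ht
  induction ht using Nat.decreasingInduction with
  | self => exact hPfinal ▸ PosSemidef.zero
  | of_succ t ht ih =>
    have htT : t ≤ T := Nat.lt_succ_iff.mp ht
    rw [hPrec t htT]
    exact riccatiOmega_posSemidef ih A B (hRt t htT) (hRUU t htT)
end
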